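/- Let k, δ, n, α be integers with 1 ≤ δ ≤ k, k + δ ≤ n < k + 2δ, and 2 ≤ α. Suppose C_1, …, C_{α−1} ⊆ F_q^{k×(n−k)} are pairwise disjoint sets of matrices such that rank(A − B) ≥ δ for any two distinct A, B in the same C_j, and let C be their union. Then the lifted code {rowspace(I_k | A) : A ∈ C} has the property that any α distinct members U_1, …, U_α satisfy dim(U_1 + ⋯ + U_α) ≥ k + δ. -/

import Mathlib

/-!
Among any `α` of the matrices two lie in the same `C j`, so it suffices to bound the sum of two
lifted spaces. The differences of the rows of `(I | M)` and `(I | N)` are the rows of `(0 | M - N)`,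
which span a space of dimension `rank (M - N)` meeting the row space of `(I | M)` trivially, since
the latter is determined by its first `k` coordinates.
-/

open scoped Classical

def gaussBinom (q : ℕ) : ℕ → ℕ → ℕ
  | _, 0 => 1
  | 0, _ + 1 => 0
  | n + 1, k + 1 => gaussBinom q n k + q ^ (k + 1) * gaussBinom q n (k + 1)

def IsPacking (F : Type) [Field F] [Fintype F] (n k t lam : ℕ)
    (S : Finset (Submodule F (Fin n → F))) : Prop :=
  (∀ U ∈ S, Module.finrank F U = k) ∧
    ∀ T : Submodule F (Fin n → F), Module.finrank F T = t →
      (S.filter fun U => T ≤ U).card ≤ lam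

noncomputable def packingNumber (F : Type) [Field F] [Fintype F] (n k t lam : ℕ) : ℕ :=
  sSup {m | ∃ S : Finset (Submodule F (Fin n → F)), IsPacking F n k t lam S ∧ S.card = m}

def IsRPacking (F : Type) [Field F] [Fintype F] (n k t lam : ℕ)
    (S : Multiset (Submodule F (Fin n → F))) : Prop :=
  (∀ U ∈ S, Module.finrank F U = k) ∧
    ∀ T : Submodule F (Fin n → F), Module.finrank F T = t →
      (S.countP fun U => T ≤ U) ≤ lam

noncomputable def rPackingNumber (F : Type) [Field F] [Fintype F] (n k t lam : ℕ) : ℕ :=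
  sSup {m | ∃ S : Multiset (Submodule F (Fin n → F)), IsRPacking F n k t lam S ∧ Multiset.card S = m}

open Module Submodule

namespace Matrix

variable {ι κ ν R : Type*}

theorem rank_fromCols_zero_left [Fintype ι] [Fintype κ] [Fintype ν] [DecidableEq κ]
    [CommRing R] [Nontrivial R] (D : Matrix ι κ R) :
    (fromCols (0 : Matrix ι ν R) D).rank = D.rank := by
  let P : Matrix κ (ν ⊕ κ) R := fromCols 0 1
  let Q : Matrix (ν ⊕ κ) κ R := fromRows 0 1
  have hD : fromCols 0 D = D * P := by
    rw [mul_fromCols, Matrix.mul_zero, Matrix.mul_one]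
  have hPQ : P * Q = 1 := by
    rw [fromCols_mul_fromRows, Matrix.mul_zero, Matrix.one_mul, zero_add]
  rw [hD]
  refine le_antisymm (rank_mul_le_left D P) ?_
  calc D.rank = (D * P * Q).rank := by rw [Matrix.mul_assoc, hPQ, Matrix.mul_one]
    _ ≤ (D * P).rank := rank_mul_le_left _ _

variable [Field R] [Fintype ι] [DecidableEq ι]

theorem linearIndependent_row_fromCols_one (M : Matrix ι κ R) :
    LinearIndependent R (fromCols (1 : Matrix ι ι R) M).row := by
  refine LinearIndependent.of_comp (LinearMap.funLeft R R Sum.inl) ?_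
  convert (Pi.basisFun R ι).linearIndependent using 1
  ext r s
  rw [Pi.basisFun_apply]
  show fromCols 1 M r (Sum.inl s) = (Pi.single r (1 : R) : ι → R) s
  simp [one_apply, Pi.single_apply, eq_comm]

theorem finrank_span_row_fromCols_one (M : Matrix ι κ R) :
    finrank R (span R (Set.range (fromCols (1 : Matrix ι ι R) M).row)) = Fintype.card ι :=
  finrank_span_eq_card (linearIndependent_row_fromCols_one M)

theorem disjoint_span_row_fromCols_one_zero [Fintype κ] (M D : Matrix ι κ R) :
    Disjoint (span R (Set.range (fromCols (1 : Matrix ι ι R) M).row))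
      (span R (Set.range (fromCols (0 : Matrix ι ι R) D).row)) := by
  rw [Submodule.disjoint_def, ← range_vecMulLinear]
  rintro _ ⟨c, rfl⟩ hc
  have hzero : span R (Set.range (fromCols (0 : Matrix ι ι R) D).row) ≤
      LinearMap.ker (LinearMap.funLeft R R Sum.inl) := by
    rw [span_le]
    rintro _ ⟨r, rfl⟩
    ext s
    simp [LinearMap.funLeft, Matrix.row]
  have hc0 : c = 0 := by
    simpa [LinearMap.funLeft, vecMul_fromCols] using LinearMap.mem_ker.mp (hzero hc)
  simp [hc0]

theorem card_add_rank_sub_le_finrank_sup [Fintype κ] (M N : Matrix ι κ R) :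
    Fintype.card ι + (M - N).rank ≤
      finrank R ↥(span R (Set.range (fromCols (1 : Matrix ι ι R) M).row) ⊔
        span R (Set.range (fromCols (1 : Matrix ι ι R) N).row)) := by
  set U := span R (Set.range (fromCols (1 : Matrix ι ι R) M).row)
  set V := span R (Set.range (fromCols (1 : Matrix ι ι R) N).row)
  set W := span R (Set.range (fromCols (0 : Matrix ι ι R) (M - N)).row)
  have hW : W ≤ U ⊔ V := by
    rw [span_le]
    rintro _ ⟨r, rfl⟩
    have hrow : (fromCols (0 : Matrix ι ι R) (M - N)).row r =
        (fromCols 1 M).row r - (fromCols 1 N).row r := by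
      ext (s | s) <;> simp [Matrix.row]
    rw [SetLike.mem_coe, hrow]
    exact sub_mem (mem_sup_left (subset_span ⟨r, rfl⟩)) (mem_sup_right (subset_span ⟨r, rfl⟩))
  calc Fintype.card ι + (M - N).rank = finrank R U + finrank R W := by
        rw [finrank_span_row_fromCols_one, ← rank_fromCols_zero_left (ν := ι),
          rank_eq_finrank_span_row]
    _ = finrank R ↥(U ⊔ W) := by
        rw [← finrank_sup_add_finrank_inf_eq,
          (disjoint_span_row_fromCols_one_zero M (M - N)).eq_bot, finrank_bot, add_zero]
    _ ≤ finrank R ↥(U ⊔ V) := finrank_mono (sup_le le_sup_left hW)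

end Matrix

theorem stmt16_general (k m δ α : ℕ) (F : Type) [Field F]
    (hα : 2 ≤ α)
    (C : Fin (α - 1) → Set (Matrix (Fin k) (Fin m) F))
    (hrank : ∀ j, ∀ A ∈ C j, ∀ B ∈ C j, A ≠ B → δ ≤ (A - B).rank)
    (A : Fin α → Matrix (Fin k) (Fin m) F) (hAinj : Function.Injective A)
    (hA : ∀ i, A i ∈ ⋃ j, C j) :
    k + δ ≤ Module.finrank F
      (⨆ i, Submodule.span F (Set.range fun r =>
        Matrix.fromCols (1 : Matrix (Fin k) (Fin k) F) (A i) r) :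
          Submodule F (Fin k ⊕ Fin m → F)) := by
  choose j hj using fun i => Set.mem_iUnion.mp (hA i)
  obtain ⟨i, i', hne, hji⟩ :=
    Fintype.exists_ne_map_eq_of_card_lt j (by simp only [Fintype.card_fin]; omega)
  have hδ : δ ≤ (A i - A i').rank := hrank (j i) _ (hj i) _ (hji ▸ hj i') (hAinj.ne hne)
  let U i := span F (Set.range (Matrix.fromCols (1 : Matrix (Fin k) (Fin k) F) (A i)).row)
  calc k + δ ≤ Fintype.card (Fin k) + (A i - A i').rank := by simpa using hδ
    _ ≤ finrank F ↥(U i ⊔ U i') := Matrix.card_add_rank_sub_le_finrank_sup _ _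
    _ ≤ _ := finrank_mono (sup_le (le_iSup U i) (le_iSup U i'))

theorem stmt16 (q n k m δ α : ℕ) (F : Type) [Field F] [Fintype F] (hq : Fintype.card F = q)
    (hδ1 : 1 ≤ δ) (hδk : δ ≤ k) (hα : 2 ≤ α) (hn : n = k + m)
    (hn1 : k + δ ≤ n) (hn2 : n < k + 2 * δ)
    (C : Fin (α - 1) → Set (Matrix (Fin k) (Fin m) F))
    (hdisj : ∀ i j, i ≠ j → Disjoint (C i) (C j))
    (hrank : ∀ j, ∀ A ∈ C j, ∀ B ∈ C j, A ≠ B → δ ≤ (A - B).rank)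
    (A : Fin α → Matrix (Fin k) (Fin m) F) (hAinj : Function.Injective A)
    (hA : ∀ i, A i ∈ ⋃ j, C j) :
    k + δ ≤ Module.finrank F
      (⨆ i, Submodule.span F (Set.range fun r =>
        Matrix.fromCols (1 : Matrix (Fin k) (Fin k) F) (A i) r) :
          Submodule F (Fin k ⊕ Fin m → F)) :=
  stmt16_general k m δ α F hα C hrank A hAinj hA
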